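/- For finite connected simple graphs G₁ and G₂, the set of peripheral vertices of the Cartesian product G₁ □ G₂ equals Peri(G₁) × Peri(G₂). -/

import Mathlib

open Finset SimpleGraph

noncomputable section

/-- Eccentricity of a vertex: maximum distance to any vertex. -/
def ecc {V : Type*} [Fintype V] (G : SimpleGraph V) (u : V) : ℕ :=
  Finset.univ.sup (G.dist u)

/-- Diameter: maximum eccentricity. -/
def gdiam {V : Type*} [Fintype V] (G : SimpleGraph V) : ℕ :=
  Finset.univ.sup (ecc G)

/-- The set of peripheral vertices: vertices of maximum eccentricity. -/
def peri {V : Type*} [Fintype V] [DecidableEq V] (G : SimpleGraph V) : Finset V :=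
  Finset.univ.filter (fun u => ecc G u = gdiam G)

/-- Wiener index: sum of distances over unordered pairs of distinct vertices. -/
def wiener {V : Type*} [Fintype V] [DecidableEq V] (G : SimpleGraph V) : ℚ :=
  (1/2) * ∑ p ∈ (Finset.univ : Finset V).offDiag, (G.dist p.1 p.2 : ℚ)

/-- Hyper-Wiener index. -/
def hyperWiener {V : Type*} [Fintype V] [DecidableEq V] (G : SimpleGraph V) : ℚ :=
  (1/4) * ∑ p ∈ (Finset.univ : Finset V).offDiag,
    ((G.dist p.1 p.2 : ℚ) + (G.dist p.1 p.2 : ℚ) ^ 2)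

/-- Peripheral Wiener index. -/
def periWiener {V : Type*} [Fintype V] [DecidableEq V] (G : SimpleGraph V) : ℚ :=
  (1/2) * ∑ p ∈ (peri G).offDiag, (G.dist p.1 p.2 : ℚ)

/-- Peripheral hyper-Wiener index. -/
def periHyperWiener {V : Type*} [Fintype V] [DecidableEq V] (G : SimpleGraph V) : ℚ :=
  (1/4) * ∑ p ∈ (peri G).offDiag,
    ((G.dist p.1 p.2 : ℚ) + (G.dist p.1 p.2 : ℚ) ^ 2)

end

/-! Distances add up in a box product, hence so do eccentricities and diameters. A vertex `(a, x)`
therefore has eccentricity `ecc a + ecc x ≤ diam G + diam H = diam (G □ H)`, with equality exactly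
when both summands attain their maxima. -/

namespace SimpleGraph

variable {V W : Type*} {G : SimpleGraph V} {H : SimpleGraph W}

lemma dist_boxProd_of_reachable {p q : V × W} (hG : G.Reachable p.1 q.1)
    (hH : H.Reachable p.2 q.2) :
    (G □ H).dist p q = G.dist p.1 q.1 + H.dist p.2 q.2 := by
  simp only [dist, edist_boxProd]
  exact ENat.toNat_add (edist_ne_top_iff_reachable.mpr hG) (edist_ne_top_iff_reachable.mpr hH)

variable [Fintype V]

lemma ecc_le_gdiam (a : V) : ecc G a ≤ gdiam G :=
  le_sup (mem_univ a)

variable [Fintype W]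

lemma ecc_boxProd (hG : G.Connected) (hH : H.Connected) (a : V) (x : W) :
    ecc (G □ H) (a, x) = ecc G a + ecc H x := by
  have := hG.nonempty
  have := hH.nonempty
  rw [ecc, ecc, ecc, sup_add_sup univ_nonempty univ_nonempty, univ_product_univ]
  congr 1
  funext q
  exact dist_boxProd_of_reachable (hG.preconnected _ _) (hH.preconnected _ _)

lemma gdiam_boxProd (hG : G.Connected) (hH : H.Connected) :
    gdiam (G □ H) = gdiam G + gdiam H := by
  have := hG.nonempty
  have := hH.nonempty
  rw [gdiam, gdiam, gdiam, sup_add_sup univ_nonempty univ_nonempty, univ_product_univ]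
  congr 1
  funext p
  exact ecc_boxProd hG hH p.1 p.2

end SimpleGraph

theorem peri_boxProd {V W : Type*} [Fintype V] [Fintype W] [DecidableEq V] [DecidableEq W]
    (G : SimpleGraph V) (H : SimpleGraph W) (hG : G.Connected) (hH : H.Connected) :
    peri (G.boxProd H) = (peri G) ×ˢ (peri H) := by
  ext ⟨a, x⟩
  simp only [peri, mem_filter, mem_univ, true_and, mem_product]
  rw [ecc_boxProd hG hH, gdiam_boxProd hG hH]
  have ha := ecc_le_gdiam (G := G) a
  have hx := ecc_le_gdiam (G := H) x
  omega
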